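/- arXiv:1210.6078 — 10 statements merged into one kernel-verified Lean document; each statement's English description precedes it below -/
import Mathlib

section
/- A proper function f : A → ℝ ∪ {+∞} is bounded from below if and only if for every nonempty B ⊆ Y there exists a G-coupling function g on A × B such that f^g is proper (f^g > −∞ everywhere and finite somewhere). -/
/-- The g-conjugate of f: f^g(y) = sup_{x ∈ A} (g(x,y) − f(x)), in extended reals. -/
noncomputable def conjG {X Y : Type*} (A : Set X) (g : X → Y → ℝ) (f : X → EReal)
    (y : Y) : EReal :=
  ⨆ x ∈ A, ((g x y : EReal) - f x)

/-- a proper f is bounded below iff for every nonempty B ⊆ Y there is a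
G-coupling function g on A × B such that f^g is proper. -/
theorem stmt_5 {X Y : Type*} [NormedAddCommGroup X] [NormedSpace ℝ X] [CompleteSpace X]
    [NormedAddCommGroup Y] [NormedSpace ℝ Y] [CompleteSpace Y] [Nontrivial Y]
    (A : Set X) (hA : A.Nonempty)
    (f : X → EReal)
    (hfproper : ∃ x ∈ A, f x ≠ ⊤)
    (hfnobot : ∀ x ∈ A, f x ≠ ⊥) :
    (∃ m : ℝ, ∀ x ∈ A, (m : EReal) ≤ f x) ↔
    ∀ B : Set Y, B.Nonempty →
      ∃ g : X → Y → ℝ,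
        (∀ x ∈ A, ∀ y ∈ B, 0 ≤ g x y) ∧
        sInf {r : ℝ | ∃ x ∈ A, ∃ y ∈ B, g x y = r} = 0 ∧
        (∀ y ∈ B, conjG A g f y ≠ ⊥) ∧
        (∃ y ∈ B, conjG A g f y ≠ ⊤) := by
  constructor
  · rintro ⟨m, hm⟩ B ⟨y₀, hy₀⟩
    refine ⟨fun _ _ => 0, fun _ _ _ _ => le_refl _, ?_, ?_, ⟨y₀, hy₀, ?_⟩⟩
    · have : {r : ℝ | ∃ x ∈ A, ∃ y ∈ B, (0:ℝ) = r} = {0} := by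
        ext r
        simp only [Set.mem_setOf_eq, Set.mem_singleton_iff]
        constructor
        · rintro ⟨x, hx, y, hy, h⟩; exact h.symm
        · rintro rfl; exact ⟨hA.choose, hA.choose_spec, y₀, hy₀, rfl⟩
      rw [this, csInf_singleton]
    · intro y _
      obtain ⟨x₀, hx₀, hx₀top⟩ := hfproper
      have hterm : ((0:ℝ) : EReal) - f x₀ ≠ ⊥ := by
        obtain ⟨c, hc⟩ : ∃ c : ℝ, f x₀ = (c : EReal) :=
          ⟨(f x₀).toReal, (EReal.coe_toReal hx₀top (hfnobot x₀ hx₀)).symm⟩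
        rw [hc, ← EReal.coe_sub]
        simp
      have hle : ((0:ℝ) : EReal) - f x₀ ≤ conjG A (fun _ _ => 0) f y := by
        exact le_iSup₂ (f := fun x (_ : x ∈ A) => (((0:ℝ) : EReal) - f x)) x₀ hx₀
      intro h
      rw [h] at hle
      exact hterm (le_bot_iff.mp hle)
    · intro h
      have hle : conjG A (fun _ _ => 0) f y₀ ≤ ((-m : ℝ) : EReal) := by
        refine iSup₂_le fun x hx => ?_
        have := EReal.sub_le_sub (le_refl ((0:ℝ) : EReal)) (hm x hx)
        calc ((0:ℝ) : EReal) - f x ≤ ((0:ℝ) : EReal) - (m : EReal) := this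
          _ = ((-m : ℝ) : EReal) := by
              rw [← EReal.coe_sub]; norm_num
      rw [h] at hle
      exact absurd (top_le_iff.mp hle) (by simp)
  · intro h
    obtain ⟨g, hnn, _, _, y, hy, hytop⟩ := h Set.univ ⟨0, trivial⟩
    obtain ⟨r, hr⟩ : ∃ r : ℝ, conjG A g f y ≤ (r : EReal) := by
      rcases hC : conjG A g f y with _ | _ | c
      · exact ⟨0, bot_le⟩
      · exact absurd hC hytop
      · exact ⟨c, le_refl _⟩
    refine ⟨-r, fun x hx => ?_⟩
    have h1 : ((g x y : ℝ) : EReal) - f x ≤ (r : EReal) :=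
      le_trans (le_iSup₂ (f := fun x (_ : x ∈ A) => (((g x y : ℝ) : EReal) - f x)) x hx) hr
    have h2 : ((0:ℝ) : EReal) - f x ≤ ((g x y : ℝ) : EReal) - f x :=
      EReal.sub_le_sub (by exact_mod_cast hnn x hx y trivial) (le_refl _)
    have h3 : -(f x) ≤ (r : EReal) := by
      have := le_trans h2 h1
      simpa using this
    have := EReal.neg_le.mp h3
    simpa [EReal.coe_neg] using this
end

section
/- If g ∈ 𝓕_f^{A,B}, i.e. inf_{(x,y)∈A×B}(f(x) + f^g(y)) = 0, then inf_{x∈A} f(x) = sup_{y∈B} (−f^g(y)) = −inf_{y∈B} f^g(y); that is, there is no duality gap between the primal problem inf f and the dual problem inf f^g. -/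
/-- if g ∈ 𝓕_f^{A,B}, i.e. inf_{(x,y)}(f(x)+f^g(y)) = 0, then
inf f = sup (−f^g) = −inf f^g: there is no duality gap. -/
theorem stmt_7 {X Y : Type*} [NormedAddCommGroup X] [NormedSpace ℝ X] [CompleteSpace X]
    [NormedAddCommGroup Y] [NormedSpace ℝ Y] [CompleteSpace Y]
    (A : Set X) (B : Set Y) (hA : A.Nonempty) (hB : B.Nonempty)
    (f : X → EReal)
    (hfproper : ∃ x ∈ A, f x ≠ ⊤)
    (hfnobot : ∀ x ∈ A, f x ≠ ⊥)
    (hfbdd : ∃ m : ℝ, ∀ x ∈ A, (m : EReal) ≤ f x)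
    (g : X → Y → ℝ)
    (hg0 : ∀ x ∈ A, ∀ y ∈ B, 0 ≤ g x y)
    (hginf : sInf {r : ℝ | ∃ x ∈ A, ∃ y ∈ B, g x y = r} = 0)
    (hconjnobot : ∀ y ∈ B, conjG A g f y ≠ ⊥)
    (hconjproper : ∃ y ∈ B, conjG A g f y ≠ ⊤)
    (hgap : (⨅ x ∈ A, ⨅ y ∈ B, (f x + conjG A g f y)) = (0 : EReal)) :
    (⨅ x ∈ A, f x) = ⨆ y ∈ B, -(conjG A g f y) ∧
    (⨅ x ∈ A, f x) = -(⨅ y ∈ B, conjG A g f y) := by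
  classical
  set c : Y → EReal := conjG A g f with hc
  set a : EReal := ⨅ x ∈ A, f x with ha
  set b : EReal := ⨅ y ∈ B, c y with hb
  obtain ⟨m, hm⟩ := hfbdd
  obtain ⟨x0, hx0A, hx0⟩ := hfproper
  obtain ⟨y0, hy0B, hy0⟩ := hconjproper
  have hterm : ∀ x ∈ A, ∀ y ∈ B, (0 : EReal) ≤ f x + c y := by
    intro x hx y hy
    calc (0:EReal) = _ := hgap.symm
    _ ≤ ⨅ y ∈ B, (f x + c y) := iInf₂_le x hx
    _ ≤ f x + c y := iInf₂_le y hy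
  have h2 : a + b ≤ 0 := by
    rw [← hgap]
    refine le_iInf₂ fun x hx => le_iInf₂ fun y hy => ?_
    exact add_le_add (iInf₂_le x hx) (iInf₂_le y hy)
  have h3 : ∀ y ∈ B, -a ≤ c y := by
    intro y hy
    rw [EReal.neg_le]
    refine le_iInf₂ fun x hx => ?_
    have h := hterm x hx y hy
    rw [EReal.neg_le]
    rcases eq_or_ne (c y) ⊤ with hct | hct
    · rw [hct]; simp
    · obtain ⟨r, hr⟩ : ∃ r : ℝ, c y = (r : EReal) :=
        ⟨(c y).toReal, (EReal.coe_toReal hct (hconjnobot y hy)).symm⟩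
      rw [hr] at h ⊢
      rw [EReal.neg_le]
      have h' := add_le_add h (le_refl (-(r:EReal)))
      rw [zero_add] at h'
      calc -(r:EReal) ≤ f x + r + -(r:EReal) := h'
        _ = f x + r - r := rfl
        _ = f x := EReal.add_sub_cancel_right
  have h3' : -a ≤ b := le_iInf₂ h3
  have ham : (m : EReal) ≤ a := le_iInf₂ hm
  have hat : a ≠ ⊤ := by
    intro h
    have : a ≤ f x0 := iInf₂_le x0 hx0A
    rw [h] at this
    exact hx0 (top_le_iff.mp this)
  have habot : a ≠ ⊥ := fun h => by simp [h] at ham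
  obtain ⟨ar, har⟩ : ∃ r : ℝ, a = (r : EReal) := ⟨a.toReal, (EReal.coe_toReal hat habot).symm⟩
  have hbt : b ≠ ⊤ := by
    intro h
    have : b ≤ c y0 := iInf₂_le y0 hy0B
    rw [h] at this
    exact hy0 (top_le_iff.mp this)
  have hbbot : b ≠ ⊥ := by
    intro h
    rw [h, har] at h3'
    simp at h3'
  obtain ⟨br, hbr⟩ : ∃ r : ℝ, b = (r : EReal) := ⟨b.toReal, (EReal.coe_toReal hbt hbbot).symm⟩
  rw [har, hbr] at h2 h3'
  have h2' : ar + br ≤ 0 := by exact_mod_cast h2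
  have h3'' : -ar ≤ br := by
    have : ((-ar : ℝ) : EReal) ≤ (br : EReal) := by push_cast; exact h3'
    exact_mod_cast this
  have key : ar = -br := by linarith
  have hab : a = -b := by rw [har, hbr]; exact_mod_cast key
  constructor
  · apply le_antisymm
    · rw [hab, EReal.neg_le]
      refine le_iInf₂ fun y hy => ?_
      rw [EReal.neg_le]
      exact le_iSup₂ (f := fun y (_ : y ∈ B) => -(c y)) y hy
    · refine iSup₂_le fun y hy => ?_
      exact EReal.neg_le.mp (h3 y hy)
  · exact hab
end

section
/- Let g ∈ 𝓕_f^{A,B}. Then x̄ is a global minimizer of f on A and ȳ is a global minimizer of f^g on B if and only if f(x̄) + f^g(ȳ) = 0. -/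
/-- for g ∈ 𝓕_f^{A,B}, x̄ solves (P) and ȳ solves (D_g) iff
f(x̄) + f^g(ȳ) = 0. -/
theorem stmt_8 {X Y : Type*} [NormedAddCommGroup X] [NormedSpace ℝ X] [CompleteSpace X]
    [NormedAddCommGroup Y] [NormedSpace ℝ Y] [CompleteSpace Y]
    (A : Set X) (B : Set Y) (hA : A.Nonempty) (hB : B.Nonempty)
    (f : X → EReal)
    (hfproper : ∃ x ∈ A, f x ≠ ⊤)
    (hfnobot : ∀ x ∈ A, f x ≠ ⊥)
    (hfbdd : ∃ m : ℝ, ∀ x ∈ A, (m : EReal) ≤ f x)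
    (g : X → Y → ℝ)
    (hg0 : ∀ x ∈ A, ∀ y ∈ B, 0 ≤ g x y)
    (hginf : sInf {r : ℝ | ∃ x ∈ A, ∃ y ∈ B, g x y = r} = 0)
    (hconjnobot : ∀ y ∈ B, conjG A g f y ≠ ⊥)
    (hconjproper : ∃ y ∈ B, conjG A g f y ≠ ⊤)
    (hgap : (⨅ x ∈ A, ⨅ y ∈ B, (f x + conjG A g f y)) = (0 : EReal))
    (x₀ : X) (hx₀ : x₀ ∈ A) (y₀ : Y) (hy₀ : y₀ ∈ B) :
    ((∀ x ∈ A, f x₀ ≤ f x) ∧ (∀ y ∈ B, conjG A g f y₀ ≤ conjG A g f y)) ↔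
      f x₀ + conjG A g f y₀ = 0 := by
  -- key: for all x ∈ A, y ∈ B, 0 ≤ f x + conjG A g f y
  have key : ∀ x ∈ A, ∀ y ∈ B, (0 : EReal) ≤ f x + conjG A g f y := by
    intro x hx y hy
    rcases eq_or_ne (f x) ⊤ with htop | htop
    · rw [htop, EReal.top_add_of_ne_bot (hconjnobot y hy)]
      exact le_top
    · have hconj : ((g x y : EReal) - f x) ≤ conjG A g f y :=
        le_iSup₂_of_le x hx le_rfl
      have h1 : (g x y : EReal) ≤ f x + conjG A g f y := by
        lift f x to ℝ using ⟨htop, hfnobot x hx⟩ with r hr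
        calc (g x y : EReal) = (g x y : EReal) - r + r := by
              rw [← EReal.coe_sub, ← EReal.coe_add, sub_add_cancel]
          _ ≤ conjG A g f y + r := add_le_add_left hconj _
          _ = r + conjG A g f y := add_comm _ _
      exact le_trans (by exact_mod_cast hg0 x hx y hy) h1
  constructor
  · rintro ⟨hxmin, hymin⟩
    have hle : f x₀ + conjG A g f y₀ ≤ 0 := by
      rw [← hgap]
      refine le_iInf₂ fun x hx => le_iInf₂ fun y hy => ?_
      exact add_le_add (hxmin x hx) (hymin y hy)
    exact le_antisymm hle (key x₀ hx₀ y₀ hy₀)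
  · intro h0
    have hfx₀top : f x₀ ≠ ⊤ := by
      intro ht
      rw [ht, EReal.top_add_of_ne_bot (hconjnobot y₀ hy₀)] at h0
      exact (EReal.top_ne_zero) h0
    have hcytop : conjG A g f y₀ ≠ ⊤ := by
      intro ht
      rw [ht, EReal.add_top_of_ne_bot (hfnobot x₀ hx₀)] at h0
      exact (EReal.top_ne_zero) h0
    constructor
    · intro x hx
      lift conjG A g f y₀ to ℝ using ⟨hcytop, hconjnobot y₀ hy₀⟩ with c hc
      have := key x hx y₀ hy₀
      rw [← h0, ← hc] at this
      exact (EReal.addLECancellable_coe c).add_le_add_iff_right.mp this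
    · intro y hy
      lift f x₀ to ℝ using ⟨hfx₀top, hfnobot x₀ hx₀⟩ with c hc
      have := key x₀ hx₀ y hy
      rw [← h0, ← hc, add_comm (c : EReal) (conjG A g f y₀),
        add_comm (c : EReal) (conjG A g f y)] at this
      exact (EReal.addLECancellable_coe c).add_le_add_iff_right.mp this
end

section
/- Let f_k → f uniformly on dom(f), g_k ∈ 𝓕_{f_k}^{A,B} for each k (so inf_{(x,y)}(f_k(x) + f_k^{g_k}(y)) = 0), and g_k → g uniformly on A × B with f^g proper. Then inf_{(x,y)∈A×B}(f(x) + f^g(y)) = 0, i.e., g ∈ 𝓕_f^{A,B}. -/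
/-- if f_k → f uniformly on dom(f), g_k ∈ 𝓕_{f_k}^{A,B} for each k,
g_k → g uniformly on A × B and f^g is proper, then inf_{(x,y)}(f(x) + f^g(y)) = 0,
i.e. g ∈ 𝓕_f^{A,B}. -/
theorem stmt_13 {X Y : Type*} [NormedAddCommGroup X] [NormedSpace ℝ X] [CompleteSpace X]
    [NormedAddCommGroup Y] [NormedSpace ℝ Y] [CompleteSpace Y]
    (A : Set X) (B : Set Y) (hA : A.Nonempty) (hB : B.Nonempty)
    (f : X → EReal)
    (hfproper : ∃ x ∈ A, f x ≠ ⊤)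
    (hfnobot : ∀ x ∈ A, f x ≠ ⊥)
    (hfbdd : ∃ m : ℝ, ∀ x ∈ A, (m : EReal) ≤ f x)
    (fk : ℕ → X → ℝ)
    (g : X → Y → ℝ) (gk : ℕ → X → Y → ℝ)
    -- each g_k is a G-coupling function
    (hgk0 : ∀ k, ∀ x ∈ A, ∀ y ∈ B, 0 ≤ gk k x y)
    (hgkinf : ∀ k, sInf {r : ℝ | ∃ x ∈ A, ∃ y ∈ B, gk k x y = r} = 0)
    -- (f_k)^{g_k} is proper and g_k ∈ 𝓕_{f_k}^{A,B}
    (hconjknobot : ∀ k, ∀ y ∈ B,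
      conjG {x ∈ A | f x ≠ ⊤} (gk k) (fun x => ((fk k x : ℝ) : EReal)) y ≠ ⊥)
    (hconjkproper : ∀ k, ∃ y ∈ B,
      conjG {x ∈ A | f x ≠ ⊤} (gk k) (fun x => ((fk k x : ℝ) : EReal)) y ≠ ⊤)
    (hgapk : ∀ k, (⨅ x ∈ {x ∈ A | f x ≠ ⊤}, ⨅ y ∈ B,
      (((fk k x : ℝ) : EReal) +
        conjG {x ∈ A | f x ≠ ⊤} (gk k) (fun x => ((fk k x : ℝ) : EReal)) y)) = (0 : EReal))
    -- uniform convergence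
    (hfunif : ∀ ε : ℝ, 0 < ε → ∃ N : ℕ, ∀ k ≥ N, ∀ x ∈ {x ∈ A | f x ≠ ⊤},
      |fk k x - (f x).toReal| < ε)
    (hgunif : ∀ ε : ℝ, 0 < ε → ∃ N : ℕ, ∀ k ≥ N, ∀ x ∈ A, ∀ y ∈ B,
      |gk k x y - g x y| < ε)
    -- f^g is proper
    (hconjnobot : ∀ y ∈ B, conjG A g f y ≠ ⊥)
    (hconjproper : ∃ y ∈ B, conjG A g f y ≠ ⊤) :
    (⨅ x ∈ A, ⨅ y ∈ B, (f x + conjG A g f y)) = (0 : EReal) := by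
  set D : Set X := {x ∈ A | f x ≠ ⊤} with hD
  set I : EReal := ⨅ x ∈ A, ⨅ y ∈ B, (f x + conjG A g f y) with hI
  -- g is nonnegative on A × B
  have hg0 : ∀ x ∈ A, ∀ y ∈ B, 0 ≤ g x y := by
    intro x hx y hy
    by_contra h
    push_neg at h
    obtain ⟨N, hN⟩ := hgunif (-(g x y)) (by linarith)
    have h1 := hN N le_rfl x hx y hy
    have h2 := hgk0 N x hx y hy
    rw [abs_lt] at h1
    linarith [h1.1]
  -- lower bound : 0 ≤ I
  have hlow : (0 : EReal) ≤ I := by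
    refine le_iInf fun x => le_iInf fun hx => le_iInf fun y => le_iInf fun hy => ?_
    rcases eq_or_ne (f x) ⊤ with hfx | hfx
    · rw [hfx, EReal.top_add_of_ne_bot (hconjnobot y hy)]
      exact le_top
    · have hr : ((f x).toReal : EReal) = f x := EReal.coe_toReal hfx (hfnobot x hx)
      set r : ℝ := (f x).toReal
      have h1 : ((g x y : ℝ) : EReal) - (r : EReal) ≤ conjG A g f y := by
        have : ((g x y : ℝ) : EReal) - f x ≤ conjG A g f y := by
          simp only [conjG]
          exact le_iSup₂ (f := fun x' (_ : x' ∈ A) => ((g x' y : ℝ) : EReal) - f x') x hx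
        rwa [← hr] at this
      calc (0 : EReal) ≤ ((g x y : ℝ) : EReal) := by exact_mod_cast hg0 x hx y hy
        _ = (r : EReal) + (((g x y - r : ℝ)) : EReal) := by norm_cast; ring
        _ ≤ f x + conjG A g f y := by
            rw [← hr]
            refine add_le_add_right ?_ _
            exact_mod_cast h1
  -- upper bound: I < ε for every ε > 0
  have hup : ∀ ε : ℝ, 0 < ε → I < (ε : EReal) := by
    intro ε hε
    obtain ⟨N1, hN1⟩ := hfunif (ε / 4) (by linarith)
    obtain ⟨N2, hN2⟩ := hgunif (ε / 4) (by linarith)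
    set k := max N1 N2
    have hk1 : N1 ≤ k := le_max_left _ _
    have hk2 : N2 ≤ k := le_max_right _ _
    set Ck : Y → EReal := conjG D (gk k) (fun x => ((fk k x : ℝ) : EReal)) with hCk
    -- extract a near-optimal pair for fk, gk
    have hex : ∃ x₀ ∈ D, ∃ y₀ ∈ B, ((fk k x₀ : ℝ) : EReal) + Ck y₀ < ((ε / 4 : ℝ) : EReal) := by
      by_contra h
      push_neg at h
      have hge : ((ε / 4 : ℝ) : EReal) ≤ ⨅ x ∈ D, ⨅ y ∈ B,
          (((fk k x : ℝ) : EReal) + Ck y) :=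
        le_iInf fun x => le_iInf fun hx => le_iInf fun y => le_iInf fun hy => h x hx y hy
      rw [hgapk k] at hge
      have : (0 : ℝ) < ε / 4 := by linarith
      exact absurd hge (by exact_mod_cast not_le.mpr this)
    obtain ⟨x₀, hx₀, y₀, hy₀, hsmall⟩ := hex
    -- Ck y₀ is a real number
    have hckbot : Ck y₀ ≠ ⊥ := hconjknobot k y₀ hy₀
    have hcktop : Ck y₀ ≠ ⊤ := by
      intro htop
      rw [htop, EReal.add_top_of_ne_bot (EReal.coe_ne_bot _)] at hsmall
      exact absurd hsmall (not_top_lt)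
    have hcr : ((Ck y₀).toReal : EReal) = Ck y₀ := EReal.coe_toReal hcktop hckbot
    set c : ℝ := (Ck y₀).toReal
    have hsmall' : fk k x₀ + c < ε / 4 := by
      rw [← hcr] at hsmall
      exact_mod_cast hsmall
    -- bound the conjugate of f w.r.t. g at y₀
    have hconjbound : conjG A g f y₀ ≤ ((c + ε / 2 : ℝ) : EReal) := by
      simp only [conjG]
      refine iSup_le fun x => iSup_le fun hx => ?_
      rcases eq_or_ne (f x) ⊤ with hfx | hfx
      · rw [hfx, EReal.sub_top]
        exact bot_le
      · have hxD : x ∈ D := ⟨hx, hfx⟩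
        have hr : ((f x).toReal : EReal) = f x := EReal.coe_toReal hfx (hfnobot x hx)
        set r : ℝ := (f x).toReal
        have h1 : |fk k x - r| < ε / 4 := hN1 k hk1 x hxD
        have h2 : |gk k x y₀ - g x y₀| < ε / 4 := hN2 k hk2 x hx y₀ hy₀
        have h3 : ((gk k x y₀ : ℝ) : EReal) - ((fk k x : ℝ) : EReal) ≤ Ck y₀ := by
          simp only [hCk, conjG]
          exact le_iSup₂
            (f := fun x' (_ : x' ∈ D) => ((gk k x' y₀ : ℝ) : EReal) - ((fk k x' : ℝ) : EReal))
            x hxD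
        rw [← hcr, ← EReal.coe_sub, EReal.coe_le_coe_iff] at h3
        rw [abs_lt] at h1 h2
        rw [← hr, ← EReal.coe_sub, EReal.coe_le_coe_iff]
        linarith
    -- conclude
    have hfr : ((f x₀).toReal : EReal) = f x₀ := EReal.coe_toReal hx₀.2 (hfnobot x₀ hx₀.1)
    set r₀ : ℝ := (f x₀).toReal
    have h1 : |fk k x₀ - r₀| < ε / 4 := hN1 k hk1 x₀ hx₀
    rw [abs_lt] at h1
    have hfinal : f x₀ + conjG A g f y₀ < (ε : EReal) := by
      calc f x₀ + conjG A g f y₀ ≤ (r₀ : EReal) + ((c + ε / 2 : ℝ) : EReal) := by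
            rw [← hfr]
            exact add_le_add_right hconjbound _
        _ = ((r₀ + (c + ε / 2) : ℝ) : EReal) := by norm_cast
        _ < (ε : EReal) := by
            rw [EReal.coe_lt_coe_iff]
            linarith
    calc I ≤ f x₀ + conjG A g f y₀ := by
          refine iInf_le_of_le x₀ (le_trans (iInf_le _ hx₀.1) ?_)
          exact iInf_le_of_le y₀ (iInf_le _ hy₀)
      _ < (ε : EReal) := hfinal
  -- combine
  by_contra hne
  have hpos : (0 : EReal) < I := hlow.lt_of_ne (Ne.symm hne)
  have hItop : I ≠ ⊤ := by
    intro h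
    have := hup 1 one_pos
    rw [h] at this
    exact absurd this not_top_lt
  have hIbot : I ≠ ⊥ := ne_bot_of_gt hpos
  have hIr : ((I.toReal : ℝ) : EReal) = I := EReal.coe_toReal hItop hIbot
  have hrpos : 0 < I.toReal := by
    rw [← hIr] at hpos
    exact_mod_cast hpos
  have := hup I.toReal hrpos
  rw [← hIr] at this
  exact absurd this (lt_irrefl _)
end

section
/- For every g ∈ 𝓕_f^{A,B}, the second conjugate satisfies inf_{x∈A} f^{gg}(x) = inf_{x∈A} f(x), and if x₀ is a global minimizer of f then x₀ is a global minimizer of f^{gg}. -/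
/-- The second g-conjugate: f^{gg}(x) = sup_{y ∈ B} (g(x,y) − f^g(y)). -/
noncomputable def biconjG {X Y : Type*} (A : Set X) (B : Set Y) (g : X → Y → ℝ)
    (f : X → EReal) (x : X) : EReal :=
  ⨆ y ∈ B, ((g x y : EReal) - conjG A g f y)

/-- for g ∈ 𝓕_f^{A,B}: inf f^{gg} = inf f, and any global minimizer of f
is a global minimizer of f^{gg}. -/
theorem stmt_14 {X Y : Type*} [NormedAddCommGroup X] [NormedSpace ℝ X] [CompleteSpace X]
    [NormedAddCommGroup Y] [NormedSpace ℝ Y] [CompleteSpace Y]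
    (A : Set X) (B : Set Y) (hA : A.Nonempty) (hB : B.Nonempty)
    (f : X → EReal)
    (hfproper : ∃ x ∈ A, f x ≠ ⊤)
    (hfnobot : ∀ x ∈ A, f x ≠ ⊥)
    (hfbdd : ∃ m : ℝ, ∀ x ∈ A, (m : EReal) ≤ f x)
    (g : X → Y → ℝ)
    (hg0 : ∀ x ∈ A, ∀ y ∈ B, 0 ≤ g x y)
    (hginf : sInf {r : ℝ | ∃ x ∈ A, ∃ y ∈ B, g x y = r} = 0)
    (hconjnobot : ∀ y ∈ B, conjG A g f y ≠ ⊥)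
    (hconjproper : ∃ y ∈ B, conjG A g f y ≠ ⊤)
    (hgap : (⨅ x ∈ A, ⨅ y ∈ B, (f x + conjG A g f y)) = (0 : EReal))
    -- the standard fact f^{gg} ≤ f
    (hbc : ∀ x ∈ A, biconjG A B g f x ≤ f x) :
    (⨅ x ∈ A, biconjG A B g f x) = (⨅ x ∈ A, f x) ∧
    ∀ x₀ ∈ A, (∀ x ∈ A, f x₀ ≤ f x) →
      ∀ x ∈ A, biconjG A B g f x₀ ≤ biconjG A B g f x := by
  obtain ⟨m, hm⟩ := hfbdd
  obtain ⟨x₁, hx₁, hx₁top⟩ := hfproper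
  set I : EReal := ⨅ x ∈ A, f x with hIdef
  have hIbot : I ≠ ⊥ := by
    refine ne_of_gt (lt_of_lt_of_le ?_ (le_iInf₂ hm))
    exact EReal.bot_lt_coe m
  have hItop : I ≠ ⊤ := by
    refine ne_of_lt (lt_of_le_of_lt (iInf₂_le x₁ hx₁) ?_)
    exact lt_of_le_of_ne le_top hx₁top
  obtain ⟨i, hi⟩ : ∃ i : ℝ, I = (i : EReal) :=
    ⟨I.toReal, (EReal.coe_toReal hItop hIbot).symm⟩
  -- key: inf f ≤ biconjG x for every x ∈ A
  have key : ∀ x ∈ A, I ≤ biconjG A B g f x := by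
    intro x hx
    by_contra hcon
    push_neg at hcon
    obtain ⟨c, hc1, hc2⟩ := EReal.exists_between_coe_real hcon
    have hpos : (0 : EReal) < ((i - c : ℝ) : EReal) := by
      rw [hi] at hc2
      exact_mod_cast sub_pos.mpr (by exact_mod_cast hc2)
    have hlt : (⨅ x ∈ A, ⨅ y ∈ B, (f x + conjG A g f y)) < ((i - c : ℝ) : EReal) := by
      rw [hgap]; exact hpos
    simp only [iInf_lt_iff] at hlt
    obtain ⟨x', hx', y', hy', hlt⟩ := hlt
    -- f x' and conjG y' are real
    have hfx'top : f x' ≠ ⊤ := by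
      intro h
      rw [h, EReal.top_add_of_ne_bot (hconjnobot y' hy')] at hlt
      exact (not_top_lt hlt)
    have hcytop : conjG A g f y' ≠ ⊤ := by
      intro h
      rw [h, EReal.add_top_of_ne_bot (hfnobot x' hx')] at hlt
      exact (not_top_lt hlt)
    obtain ⟨a, ha⟩ : ∃ a : ℝ, f x' = (a : EReal) :=
      ⟨(f x').toReal, (EReal.coe_toReal hfx'top (hfnobot x' hx')).symm⟩
    obtain ⟨b, hb⟩ : ∃ b : ℝ, conjG A g f y' = (b : EReal) :=
      ⟨(conjG A g f y').toReal, (EReal.coe_toReal hcytop (hconjnobot y' hy')).symm⟩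
    rw [ha, hb] at hlt
    have hab : a + b < i - c := by exact_mod_cast hlt
    have hia : i ≤ a := by
      have := iInf₂_le (f := fun x (_ : x ∈ A) => f x) x' hx'
      rw [← hIdef, hi, ha] at this
      exact_mod_cast this
    have hbc' : c < -b := by linarith
    -- biconjG x ≥ g x y' − conjG y' ≥ −b > c
    have hle : ((g x y' : ℝ) : EReal) - conjG A g f y' ≤ biconjG A B g f x :=
      le_iSup₂ (f := fun y (_ : y ∈ B) => ((g x y : ℝ) : EReal) - conjG A g f y) y' hy'
    rw [hb, ← EReal.coe_sub] at hle
    have : (c : EReal) < ((g x y' - b : ℝ) : EReal) := by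
      have h0 : (0 : ℝ) ≤ g x y' := hg0 x hx y' hy'
      exact_mod_cast by linarith
    exact absurd (lt_of_lt_of_le this hle) (not_lt.mpr hc1.le)
  constructor
  · refine le_antisymm (iInf₂_mono hbc) (le_iInf₂ key)
  · intro x₀ hx₀ hmin x hx
    calc biconjG A B g f x₀ ≤ f x₀ := hbc x₀ hx₀
      _ ≤ I := le_iInf₂ hmin
      _ ≤ biconjG A B g f x := key x hx
end

section
/- For g ∈ 𝓕_f^{A,B} and the Lagrange-type function L₁(x,y) := f(x) − g(x,y), the strong minimax equality holds: sup_{y∈B} inf_{x∈A} L₁(x,y) = inf_{x∈A} sup_{y∈B} L₁(x,y), and both sides equal inf_{x∈A} f(x). -/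
/-- for g ∈ 𝓕_f^{A,B} and L₁(x,y) = f(x) − g(x,y), the minimax equality
sup_y inf_x L₁ = inf_x sup_y L₁ holds, and both sides equal inf f. -/
theorem stmt_15 {X Y : Type*} [NormedAddCommGroup X] [NormedSpace ℝ X] [CompleteSpace X]
    [NormedAddCommGroup Y] [NormedSpace ℝ Y] [CompleteSpace Y]
    (A : Set X) (B : Set Y) (hA : A.Nonempty) (hB : B.Nonempty)
    (f : X → EReal)
    (hfproper : ∃ x ∈ A, f x ≠ ⊤)
    (hfnobot : ∀ x ∈ A, f x ≠ ⊥)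
    (hfbdd : ∃ m : ℝ, ∀ x ∈ A, (m : EReal) ≤ f x)
    (g : X → Y → ℝ)
    (hg0 : ∀ x ∈ A, ∀ y ∈ B, 0 ≤ g x y)
    (hginf : sInf {r : ℝ | ∃ x ∈ A, ∃ y ∈ B, g x y = r} = 0)
    (hconjnobot : ∀ y ∈ B, conjG A g f y ≠ ⊥)
    (hconjproper : ∃ y ∈ B, conjG A g f y ≠ ⊤)
    (hgap : (⨅ x ∈ A, ⨅ y ∈ B, (f x + conjG A g f y)) = (0 : EReal)) :
    (⨆ y ∈ B, ⨅ x ∈ A, (f x - (g x y : EReal))) =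
      (⨅ x ∈ A, ⨆ y ∈ B, (f x - (g x y : EReal))) ∧
    (⨅ x ∈ A, ⨆ y ∈ B, (f x - (g x y : EReal))) = (⨅ x ∈ A, f x) := by
  set S := ⨆ y ∈ B, ⨅ x ∈ A, (f x - (g x y : EReal)) with hS
  set M := ⨅ x ∈ A, ⨆ y ∈ B, (f x - (g x y : EReal)) with hM
  set I := ⨅ x ∈ A, f x with hI
  -- S ≤ M (weak minimax inequality)
  have hSM : S ≤ M := by
    refine iSup₂_le fun y hy => le_iInf₂ fun x hx => ?_
    exact le_trans (iInf₂_le x hx)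
      (le_iSup₂ (f := fun y (_ : y ∈ B) => f x - (g x y : EReal)) y hy)
  -- M ≤ I
  have hMI : M ≤ I := by
    refine iInf₂_mono fun x hx => iSup₂_le fun y hy => ?_
    have : f x - (g x y : EReal) ≤ f x - (0 : EReal) :=
      EReal.sub_le_sub le_rfl (by exact_mod_cast hg0 x hx y hy)
    simpa using this
  -- I is a real number
  have hIbot : I ≠ ⊥ := by
    obtain ⟨m, hm⟩ := hfbdd
    have hmle : (m : EReal) ≤ I := le_iInf₂ hm
    intro h
    rw [h] at hmle
    exact (EReal.coe_ne_bot m) (le_bot_iff.mp hmle)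
  have hItop : I ≠ ⊤ := by
    obtain ⟨x₀, hx₀, hx₀t⟩ := hfproper
    exact fun h => hx₀t (top_le_iff.mp (h ▸ iInf₂_le x₀ hx₀))
  -- I ≤ S
  have hIS : I ≤ S := by
    by_contra hcon
    push_neg at hcon
    obtain ⟨i, hi⟩ : ∃ i : ℝ, I = (i : EReal) := by
      lift I to ℝ using ⟨hItop, hIbot⟩ with i
      exact ⟨i, rfl⟩
    obtain ⟨z, hSz, hzI⟩ := EReal.lt_iff_exists_real_btwn.mp hcon
    rw [hi] at hzI
    have hzi : z < i := EReal.coe_lt_coe_iff.mp hzI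
    have hε : (0 : EReal) < ((i - z : ℝ) : EReal) := by
      exact_mod_cast sub_pos.mpr hzi
    have hlt : (⨅ x ∈ A, ⨅ y ∈ B, (f x + conjG A g f y)) < ((i - z : ℝ) : EReal) := by
      rw [hgap]; exact hε
    simp only [iInf_lt_iff] at hlt
    obtain ⟨x, hx, y, hy, hxy⟩ := hlt
    have hfxb : f x ≠ ⊥ := hfnobot x hx
    have hcyb : conjG A g f y ≠ ⊥ := hconjnobot y hy
    have hfxt : f x ≠ ⊤ := by
      intro h
      rw [h, EReal.top_add_of_ne_bot hcyb] at hxy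
      exact not_top_lt hxy
    have hcyt : conjG A g f y ≠ ⊤ := by
      intro h
      rw [h, EReal.add_top_of_ne_bot hfxb] at hxy
      exact not_top_lt hxy
    obtain ⟨a, ha⟩ : ∃ a : ℝ, f x = (a : EReal) := by
      lift f x to ℝ using ⟨hfxt, hfxb⟩ with a; exact ⟨a, rfl⟩
    obtain ⟨b, hb⟩ : ∃ b : ℝ, conjG A g f y = (b : EReal) := by
      lift conjG A g f y to ℝ using ⟨hcyt, hcyb⟩ with b; exact ⟨b, rfl⟩
    rw [ha, hb] at hxy
    have hab : a + b < i - z := by exact_mod_cast hxy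
    have hia : i ≤ a := by
      have := iInf₂_le (f := fun x (_ : x ∈ A) => f x) x hx
      rw [← hI, hi, ha] at this
      exact_mod_cast this
    have hzb : z < -b := by linarith
    -- inf_{x'} (f x' - g x' y) ≥ -b
    have hinf : ((-b : ℝ) : EReal) ≤ ⨅ x' ∈ A, (f x' - (g x' y : EReal)) := by
      refine le_iInf₂ fun x' hx' => ?_
      have hle : (g x' y : EReal) - f x' ≤ (b : EReal) := by
        rw [← hb]
        exact le_iSup₂ (f := fun x' (_ : x' ∈ A) => (g x' y : EReal) - f x') x' hx'
      have hle2 : (g x' y : EReal) ≤ (b : EReal) + f x' :=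
        (EReal.sub_le_iff_le_add (Or.inl (hfnobot x' hx'))
          (Or.inr (EReal.coe_ne_bot b))).mp hle
      rw [EReal.le_sub_iff_add_le (Or.inl (EReal.coe_ne_bot _))
        (Or.inl (EReal.coe_ne_top _))]
      have key : ((-b : ℝ) : EReal) + (g x' y : EReal)
          = (g x' y : EReal) - (b : EReal) := by
        rw [← EReal.coe_add, ← EReal.coe_sub]
        norm_cast
        ring
      rw [key, EReal.sub_le_iff_le_add (Or.inl (EReal.coe_ne_bot b))
        (Or.inl (EReal.coe_ne_top b)), add_comm]
      exact hle2
    have hbS : ((-b : ℝ) : EReal) ≤ S :=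
      le_trans hinf (le_iSup₂ (f := fun y (_ : y ∈ B) => ⨅ x ∈ A, (f x - (g x y : EReal))) y hy)
    have : (z : EReal) < S := lt_of_lt_of_le (by exact_mod_cast hzb) hbS
    exact absurd hSz (not_lt.mpr this.le)
  have h1 : S = M := le_antisymm hSM (le_trans hMI hIS)
  exact ⟨h1, le_antisymm hMI (le_trans hIS hSM)⟩
end

section
/- If (x₀, y₀) ∈ A × B is a saddle point of L₁(x,y) = f(x) − g(x,y) (i.e., L₁(x₀,y) ≤ L₁(x₀,y₀) ≤ L₁(x,y₀) for all x ∈ A, y ∈ B) with g ∈ 𝓕_f^{A,B}, then y₀ is a global minimizer of f^g on B. -/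
/-- if (x₀,y₀) is a saddle point of L₁(x,y) = f(x) − g(x,y) with
g ∈ 𝓕_f^{A,B}, then y₀ is a global minimizer of f^g on B. -/
theorem stmt_16 {X Y : Type*} [NormedAddCommGroup X] [NormedSpace ℝ X] [CompleteSpace X]
    [NormedAddCommGroup Y] [NormedSpace ℝ Y] [CompleteSpace Y]
    (A : Set X) (B : Set Y) (hA : A.Nonempty) (hB : B.Nonempty)
    (f : X → EReal)
    (hfproper : ∃ x ∈ A, f x ≠ ⊤)
    (hfnobot : ∀ x ∈ A, f x ≠ ⊥)
    (hfbdd : ∃ m : ℝ, ∀ x ∈ A, (m : EReal) ≤ f x)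
    (g : X → Y → ℝ)
    (hg0 : ∀ x ∈ A, ∀ y ∈ B, 0 ≤ g x y)
    (hginf : sInf {r : ℝ | ∃ x ∈ A, ∃ y ∈ B, g x y = r} = 0)
    (hconjnobot : ∀ y ∈ B, conjG A g f y ≠ ⊥)
    (hconjproper : ∃ y ∈ B, conjG A g f y ≠ ⊤)
    (hgap : (⨅ x ∈ A, ⨅ y ∈ B, (f x + conjG A g f y)) = (0 : EReal))
    (x₀ : X) (hx₀ : x₀ ∈ A) (y₀ : Y) (hy₀ : y₀ ∈ B)
    (hsaddle : ∀ x ∈ A, ∀ y ∈ B,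
      f x₀ - (g x₀ y : EReal) ≤ f x₀ - (g x₀ y₀ : EReal) ∧
      f x₀ - (g x₀ y₀ : EReal) ≤ f x - (g x y₀ : EReal)) :
    ∀ y ∈ B, conjG A g f y₀ ≤ conjG A g f y := by
  -- f x₀ is real
  have hx0top : f x₀ ≠ ⊤ := by
    intro htop
    obtain ⟨x₁, hx₁, hx₁top⟩ := hfproper
    have h := (hsaddle x₁ hx₁ y₀ hy₀).2
    rw [htop, EReal.top_sub_coe] at h
    have : f x₁ - (g x₁ y₀ : EReal) = ⊤ := top_le_iff.mp h
    have : f x₁ = ⊤ := by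
      by_contra hne
      lift f x₁ to ℝ using ⟨hne, hfnobot x₁ hx₁⟩ with s
      rw [← EReal.coe_sub] at this
      exact (EReal.coe_ne_top _) this
    exact hx₁top this
  lift f x₀ to ℝ using ⟨hx0top, hfnobot x₀ hx₀⟩ with r hr
  intro y hy
  -- conjG y₀ ≤ g x₀ y₀ - r
  have h1 : conjG A g f y₀ ≤ ((g x₀ y₀ : ℝ) : EReal) - (r : EReal) := by
    apply iSup₂_le
    intro x hx
    have h := (hsaddle x hx y₀ hy₀).2
    rcases eq_or_ne (f x) ⊤ with htop | hne
    · rw [htop, EReal.sub_top]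
      exact bot_le
    · lift f x to ℝ using ⟨hne, hfnobot x hx⟩ with s hs
      rw [← EReal.coe_sub, ← EReal.coe_sub, EReal.coe_le_coe_iff] at h
      rw [← EReal.coe_sub, ← EReal.coe_sub]
      exact EReal.coe_le_coe_iff.mpr (by linarith)
  -- g x₀ y₀ ≤ g x₀ y
  have h2 : g x₀ y₀ ≤ g x₀ y := by
    have h := (hsaddle x₀ hx₀ y hy).1
    rw [← EReal.coe_sub, ← EReal.coe_sub, EReal.coe_le_coe_iff] at h
    linarith
  -- g x₀ y - r ≤ conjG y
  have h3 : ((g x₀ y : ℝ) : EReal) - (r : EReal) ≤ conjG A g f y :=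
    le_iSup₂_of_le x₀ hx₀ (by rw [← hr])
  calc conjG A g f y₀ ≤ ((g x₀ y₀ : ℝ) : EReal) - (r : EReal) := h1
    _ ≤ ((g x₀ y : ℝ) : EReal) - (r : EReal) := by
        rw [← EReal.coe_sub, ← EReal.coe_sub]
        exact EReal.coe_le_coe_iff.mpr (by linarith)
    _ ≤ conjG A g f y := h3
end

section
/- If (x₀, y₀) is a saddle point of L₁(x,y) = f(x) − g(x,y) with g ∈ 𝓕_f^{A,B}, then f^{gg}(x₀) = f(x₀), where f^{gg}(x) = sup_{y∈B}(g(x,y) − f^g(y)). -/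
/-- if (x₀,y₀) is a saddle point of L₁(x,y) = f(x) − g(x,y) with
g ∈ 𝓕_f^{A,B}, then f^{gg}(x₀) = f(x₀). -/
theorem stmt_17 {X Y : Type*} [NormedAddCommGroup X] [NormedSpace ℝ X] [CompleteSpace X]
    [NormedAddCommGroup Y] [NormedSpace ℝ Y] [CompleteSpace Y]
    (A : Set X) (B : Set Y) (hA : A.Nonempty) (hB : B.Nonempty)
    (f : X → EReal)
    (hfproper : ∃ x ∈ A, f x ≠ ⊤)
    (hfnobot : ∀ x ∈ A, f x ≠ ⊥)
    (hfbdd : ∃ m : ℝ, ∀ x ∈ A, (m : EReal) ≤ f x)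
    (g : X → Y → ℝ)
    (hg0 : ∀ x ∈ A, ∀ y ∈ B, 0 ≤ g x y)
    (hginf : sInf {r : ℝ | ∃ x ∈ A, ∃ y ∈ B, g x y = r} = 0)
    (hconjnobot : ∀ y ∈ B, conjG A g f y ≠ ⊥)
    (hconjproper : ∃ y ∈ B, conjG A g f y ≠ ⊤)
    (hgap : (⨅ x ∈ A, ⨅ y ∈ B, (f x + conjG A g f y)) = (0 : EReal))
    -- the standard fact f^{gg} ≤ f
    (hbc : ∀ x ∈ A, biconjG A B g f x ≤ f x)
    (x₀ : X) (hx₀ : x₀ ∈ A) (y₀ : Y) (hy₀ : y₀ ∈ B)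
    (hsaddle : ∀ x ∈ A, ∀ y ∈ B,
      f x₀ - (g x₀ y : EReal) ≤ f x₀ - (g x₀ y₀ : EReal) ∧
      f x₀ - (g x₀ y₀ : EReal) ≤ f x - (g x y₀ : EReal)) :
    biconjG A B g f x₀ = f x₀ := by
  have hne_bot := hfnobot x₀ hx₀
  have hne_top : f x₀ ≠ ⊤ := by
    intro htop
    obtain ⟨x₁, hx₁, hx₁top⟩ := hfproper
    have h2 := (hsaddle x₁ hx₁ y₀ hy₀).2
    rw [htop, EReal.top_sub_coe, top_le_iff] at h2
    have h3 : f x₁ = ((f x₁).toReal : EReal) :=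
      (EReal.coe_toReal hx₁top (hfnobot x₁ hx₁)).symm
    rw [h3, ← EReal.coe_sub] at h2
    exact EReal.coe_ne_top _ h2
  set c : ℝ := (f x₀).toReal with hcdef
  have hc : f x₀ = (c : EReal) := (EReal.coe_toReal hne_top hne_bot).symm
  have hconjle : conjG A g f y₀ ≤ ((g x₀ y₀ - c : ℝ) : EReal) := by
    unfold conjG
    refine iSup₂_le fun x hx => ?_
    by_cases hxt : f x = ⊤
    · simp [hxt]
    · have hxr : f x = ((f x).toReal : EReal) :=
        (EReal.coe_toReal hxt (hfnobot x hx)).symm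
      have h2 := (hsaddle x hx y₀ hy₀).2
      rw [hc, hxr, ← EReal.coe_sub, ← EReal.coe_sub] at h2
      rw [hxr, ← EReal.coe_sub]
      exact_mod_cast by linarith [EReal.coe_le_coe_iff.mp h2]
  have hconjnt : conjG A g f y₀ ≠ ⊤ :=
    ne_top_of_le_ne_top (EReal.coe_ne_top _) hconjle
  set d : ℝ := (conjG A g f y₀).toReal with hddef
  have hd : conjG A g f y₀ = (d : EReal) :=
    (EReal.coe_toReal hconjnt (hconjnobot y₀ hy₀)).symm
  have hdle : d ≤ g x₀ y₀ - c := by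
    rw [hd] at hconjle; exact_mod_cast hconjle
  have hge : f x₀ ≤ biconjG A B g f x₀ := by
    have hterm : f x₀ ≤ (g x₀ y₀ : EReal) - conjG A g f y₀ := by
      rw [hc, hd, ← EReal.coe_sub]
      exact_mod_cast by linarith
    exact hterm.trans (le_iSup₂ (f := fun y (_ : y ∈ B) =>
      (g x₀ y : EReal) - conjG A g f y) y₀ hy₀)
  exact le_antisymm (hbc x₀ hx₀) hge
end

section
/- If x₀ is a global minimizer of f on A and y₀ is a global minimizer of f^g on B, where g ∈ 𝓕_f^{A,B}, then g(x₀,y₀) = 0 and (x₀,y₀) is a saddle point of L₁(x,y) = f(x) − g(x,y). -/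
/-- if x₀ solves (P) and y₀ solves (D_g) with g ∈ 𝓕_f^{A,B}, then
g(x₀,y₀) = 0 and (x₀,y₀) is a saddle point of L₁(x,y) = f(x) − g(x,y). -/
theorem stmt_18 {X Y : Type*} [NormedAddCommGroup X] [NormedSpace ℝ X] [CompleteSpace X]
    [NormedAddCommGroup Y] [NormedSpace ℝ Y] [CompleteSpace Y]
    (A : Set X) (B : Set Y) (hA : A.Nonempty) (hB : B.Nonempty)
    (f : X → EReal)
    (hfproper : ∃ x ∈ A, f x ≠ ⊤)
    (hfnobot : ∀ x ∈ A, f x ≠ ⊥)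
    (hfbdd : ∃ m : ℝ, ∀ x ∈ A, (m : EReal) ≤ f x)
    (g : X → Y → ℝ)
    (hg0 : ∀ x ∈ A, ∀ y ∈ B, 0 ≤ g x y)
    (hginf : sInf {r : ℝ | ∃ x ∈ A, ∃ y ∈ B, g x y = r} = 0)
    (hconjnobot : ∀ y ∈ B, conjG A g f y ≠ ⊥)
    (hconjproper : ∃ y ∈ B, conjG A g f y ≠ ⊤)
    (hgap : (⨅ x ∈ A, ⨅ y ∈ B, (f x + conjG A g f y)) = (0 : EReal))
    (x₀ : X) (hx₀ : x₀ ∈ A) (y₀ : Y) (hy₀ : y₀ ∈ B)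
    (hxmin : ∀ x ∈ A, f x₀ ≤ f x)
    (hymin : ∀ y ∈ B, conjG A g f y₀ ≤ conjG A g f y) :
    g x₀ y₀ = 0 ∧
    (∀ x ∈ A, ∀ y ∈ B,
      f x₀ - (g x₀ y : EReal) ≤ f x₀ - (g x₀ y₀ : EReal) ∧
      f x₀ - (g x₀ y₀ : EReal) ≤ f x - (g x y₀ : EReal)) := by
  obtain ⟨xp, hxp, hxpT⟩ := hfproper
  have hfx₀T : f x₀ ≠ ⊤ := fun h => hxpT (top_le_iff.mp (h ▸ hxmin xp hxp))
  have hfx₀B : f x₀ ≠ ⊥ := hfnobot x₀ hx₀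
  obtain ⟨yp, hyp, hypT⟩ := hconjproper
  have hCT : conjG A g f y₀ ≠ ⊤ := fun h => hypT (top_le_iff.mp (h ▸ hymin yp hyp))
  have hCB : conjG A g f y₀ ≠ ⊥ := hconjnobot y₀ hy₀
  obtain ⟨r, hr⟩ : ∃ r : ℝ, f x₀ = (r : EReal) :=
    ⟨(f x₀).toReal, (EReal.coe_toReal hfx₀T hfx₀B).symm⟩
  obtain ⟨c, hc⟩ : ∃ c : ℝ, conjG A g f y₀ = (c : EReal) :=
    ⟨(conjG A g f y₀).toReal, (EReal.coe_toReal hCT hCB).symm⟩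
  have hle : f x₀ + conjG A g f y₀ ≤ 0 := by
    rw [← hgap]
    exact le_iInf₂ fun x hx => le_iInf₂ fun y hy =>
      add_le_add (hxmin x hx) (hymin y hy)
  have hge : (0 : EReal) ≤ f x₀ + conjG A g f y₀ := by
    rw [← hgap]
    exact le_trans (iInf₂_le x₀ hx₀) (iInf₂_le y₀ hy₀)
  have hsum : f x₀ + conjG A g f y₀ = 0 := le_antisymm hle hge
  rw [hr, hc] at hsum
  have hrc : r + c = 0 := by exact_mod_cast hsum
  have hsup : ∀ x ∈ A, ((g x y₀ : EReal) - f x) ≤ conjG A g f y₀ := by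
    intro x hx
    exact le_iSup₂ (f := fun x (_ : x ∈ A) => ((g x y₀ : EReal) - f x)) x hx
  have hg00 : g x₀ y₀ = 0 := by
    have h := hsup x₀ hx₀
    rw [hr, hc, ← EReal.coe_sub] at h
    have : g x₀ y₀ - r ≤ c := by exact_mod_cast h
    have := hg0 x₀ hx₀ y₀ hy₀
    linarith
  refine ⟨hg00, fun x hx y hy => ⟨?_, ?_⟩⟩
  · rw [hr, hg00, ← EReal.coe_sub, ← EReal.coe_sub, EReal.coe_le_coe_iff]
    have := hg0 x₀ hx₀ y hy
    linarith
  · rw [hr, hg00, ← EReal.coe_sub]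
    rcases eq_or_ne (f x) ⊤ with hT | hT
    · rw [hT, EReal.top_sub_coe]
      exact le_top
    · obtain ⟨s, hs⟩ : ∃ s : ℝ, f x = (s : EReal) :=
        ⟨(f x).toReal, (EReal.coe_toReal hT (hfnobot x hx)).symm⟩
      have h := hsup x hx
      rw [hs, hc, ← EReal.coe_sub] at h
      have h' : g x y₀ - s ≤ c := by exact_mod_cast h
      rw [hs, ← EReal.coe_sub, EReal.coe_le_coe_iff]
      linarith
end

section
/- Let g ∈ 𝓕_f^{A,B} additionally satisfy inf_{y∈B} g(x,y) = 0 for every x ∈ A. Then (x₀,y₀) is a saddle point of L₁(x,y) = f(x) − g(x,y) if and only if x₀ is a global minimizer of f on A and y₀ is a global minimizer of f^g on B; moreover, in this case g(x₀,y₀) = 0. -/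
private lemma ereal_sub_le_self (a : EReal) (c : ℝ) (hc : 0 ≤ c) : a - (c : EReal) ≤ a := by
  rw [sub_eq_add_neg]
  calc a + (-(c : EReal)) ≤ a + 0 := by
        refine add_le_add le_rfl ?_
        rw [← EReal.coe_neg, ← EReal.coe_zero, EReal.coe_le_coe_iff]
        linarith
    _ = a := add_zero a

private lemma aux_forward {X Y : Type*} (A : Set X) (B : Set Y)
    (f : X → EReal)
    (hfproper : ∃ x ∈ A, f x ≠ ⊤)
    (hfnobot : ∀ x ∈ A, f x ≠ ⊥)
    (g : X → Y → ℝ)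
    (hg0 : ∀ x ∈ A, ∀ y ∈ B, 0 ≤ g x y)
    (x₀ : X) (hx₀ : x₀ ∈ A) (y₀ : Y) (hy₀ : y₀ ∈ B)
    (hgx0 : sInf {r : ℝ | ∃ y ∈ B, g x₀ y = r} = 0)
    (hsad : ∀ x ∈ A, ∀ y ∈ B,
        f x₀ - (g x₀ y : EReal) ≤ f x₀ - (g x₀ y₀ : EReal) ∧
        f x₀ - (g x₀ y₀ : EReal) ≤ f x - (g x y₀ : EReal)) :
    g x₀ y₀ = 0 ∧ (∀ x ∈ A, f x₀ ≤ f x) ∧ (∀ y ∈ B, conjG A g f y₀ ≤ conjG A g f y) := by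
  obtain ⟨x₁, hx₁, hx₁t⟩ := hfproper
  -- f x₀ is not ⊤
  have hft : f x₀ ≠ ⊤ := by
    intro ht
    have h2 := (hsad x₁ hx₁ y₀ hy₀).2
    rw [ht] at h2
    rw [EReal.top_sub_coe, top_le_iff] at h2
    obtain ⟨a, ha⟩ : ∃ a : ℝ, f x₁ = a :=
      ⟨(f x₁).toReal, (EReal.coe_toReal hx₁t (hfnobot x₁ hx₁)).symm⟩
    rw [ha, ← EReal.coe_sub] at h2
    exact EReal.coe_ne_top _ h2
  obtain ⟨r, hr⟩ : ∃ r : ℝ, f x₀ = r :=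
    ⟨(f x₀).toReal, (EReal.coe_toReal hft (hfnobot x₀ hx₀)).symm⟩
  -- g x₀ y₀ is a lower bound for g x₀ · on B
  have hglb : ∀ y ∈ B, g x₀ y₀ ≤ g x₀ y := by
    intro y hy
    have h1 := (hsad x₀ hx₀ y hy).1
    rw [hr, ← EReal.coe_sub, ← EReal.coe_sub, EReal.coe_le_coe_iff] at h1
    linarith
  have hg00 : g x₀ y₀ = 0 := by
    have hub : g x₀ y₀ ≤ sInf {r : ℝ | ∃ y ∈ B, g x₀ y = r} := by
      refine le_csInf ⟨g x₀ y₀, ⟨y₀, hy₀, rfl⟩⟩ ?_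
      rintro b ⟨y, hy, rfl⟩
      exact hglb y hy
    rw [hgx0] at hub
    exact le_antisymm hub (hg0 x₀ hx₀ y₀ hy₀)
  have hkey : ∀ x ∈ A, (r : EReal) ≤ f x - (g x y₀ : EReal) := by
    intro x hx
    have h2 := (hsad x hx y₀ hy₀).2
    rw [hr, hg00] at h2
    simpa using h2
  refine ⟨hg00, ?_, ?_⟩
  · intro x hx
    rw [hr]
    exact (hkey x hx).trans (ereal_sub_le_self _ _ (hg0 x hx y₀ hy₀))
  · -- y₀ minimizes conjG
    have hneg : ∀ x ∈ A, (g x y₀ : EReal) - f x ≤ ((-r : ℝ) : EReal) := by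
      intro x hx
      rcases eq_or_ne (f x) ⊤ with h | h
      · rw [h, EReal.sub_top]
        exact bot_le
      · obtain ⟨s, hs⟩ : ∃ s : ℝ, f x = s :=
          ⟨(f x).toReal, (EReal.coe_toReal h (hfnobot x hx)).symm⟩
        have h2 := hkey x hx
        rw [hs, ← EReal.coe_sub, EReal.coe_le_coe_iff] at h2
        rw [hs, ← EReal.coe_sub, EReal.coe_le_coe_iff]
        linarith
    have hub : conjG A g f y₀ ≤ ((-r : ℝ) : EReal) := iSup₂_le hneg
    intro y hy
    have hlo : ((-r : ℝ) : EReal) ≤ conjG A g f y := by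
      have h1 : ((-r : ℝ) : EReal) ≤ (g x₀ y : EReal) - f x₀ := by
        rw [hr, ← EReal.coe_sub, EReal.coe_le_coe_iff]
        have := hg0 x₀ hx₀ y hy
        linarith
      exact h1.trans (le_iSup₂ (f := fun x (_ : x ∈ A) => (g x y : EReal) - f x) x₀ hx₀)
    exact hub.trans hlo

/-- if g ∈ 𝓕_f^{A,B} also satisfies inf_{y∈B} g(x,y) = 0 for every x ∈ A,
then (x₀,y₀) is a saddle point of L₁(x,y) = f(x) − g(x,y) iff x₀ is a global minimizer
of f on A and y₀ is a global minimizer of f^g on B; moreover, in this case g(x₀,y₀) = 0. -/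
theorem stmt_19 {X Y : Type*} [NormedAddCommGroup X] [NormedSpace ℝ X] [CompleteSpace X]
    [NormedAddCommGroup Y] [NormedSpace ℝ Y] [CompleteSpace Y]
    (A : Set X) (B : Set Y) (hA : A.Nonempty) (hB : B.Nonempty)
    (f : X → EReal)
    (hfproper : ∃ x ∈ A, f x ≠ ⊤)
    (hfnobot : ∀ x ∈ A, f x ≠ ⊥)
    (hfbdd : ∃ m : ℝ, ∀ x ∈ A, (m : EReal) ≤ f x)
    (g : X → Y → ℝ)
    (hg0 : ∀ x ∈ A, ∀ y ∈ B, 0 ≤ g x y)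
    (hginf : sInf {r : ℝ | ∃ x ∈ A, ∃ y ∈ B, g x y = r} = 0)
    (hgx : ∀ x ∈ A, sInf {r : ℝ | ∃ y ∈ B, g x y = r} = 0)
    (hconjnobot : ∀ y ∈ B, conjG A g f y ≠ ⊥)
    (hconjproper : ∃ y ∈ B, conjG A g f y ≠ ⊤)
    (hgap : (⨅ x ∈ A, ⨅ y ∈ B, (f x + conjG A g f y)) = (0 : EReal))
    (x₀ : X) (hx₀ : x₀ ∈ A) (y₀ : Y) (hy₀ : y₀ ∈ B) :
    ((∀ x ∈ A, ∀ y ∈ B,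
        f x₀ - (g x₀ y : EReal) ≤ f x₀ - (g x₀ y₀ : EReal) ∧
        f x₀ - (g x₀ y₀ : EReal) ≤ f x - (g x y₀ : EReal)) ↔
      ((∀ x ∈ A, f x₀ ≤ f x) ∧ (∀ y ∈ B, conjG A g f y₀ ≤ conjG A g f y))) ∧
    ((∀ x ∈ A, ∀ y ∈ B,
        f x₀ - (g x₀ y : EReal) ≤ f x₀ - (g x₀ y₀ : EReal) ∧
        f x₀ - (g x₀ y₀ : EReal) ≤ f x - (g x y₀ : EReal)) →
      g x₀ y₀ = 0) := by
  constructor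
  · constructor
    · intro hsad
      have h := aux_forward A B f hfproper hfnobot g hg0 x₀ hx₀ y₀ hy₀ (hgx x₀ hx₀) hsad
      exact ⟨h.2.1, h.2.2⟩
    · -- backward direction
      rintro ⟨hmf, hmc⟩
      obtain ⟨x₁, hx₁, hx₁t⟩ := hfproper
      have hft : f x₀ ≠ ⊤ := fun ht => hx₁t (top_le_iff.mp (ht ▸ hmf x₁ hx₁))
      obtain ⟨r, hr⟩ : ∃ r : ℝ, f x₀ = r :=
        ⟨(f x₀).toReal, (EReal.coe_toReal hft (hfnobot x₀ hx₀)).symm⟩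
      -- the value f x₀ + conjG y₀ equals 0
      have h1 : (⨅ x ∈ A, ⨅ y ∈ B, (f x + conjG A g f y)) ≤ f x₀ + conjG A g f y₀ :=
        (iInf₂_le x₀ hx₀).trans (iInf₂_le y₀ hy₀)
      rw [hgap] at h1
      have h2 : f x₀ + conjG A g f y₀ ≤ (⨅ x ∈ A, ⨅ y ∈ B, (f x + conjG A g f y)) :=
        le_iInf₂ fun x hx => le_iInf₂ fun y hy => add_le_add (hmf x hx) (hmc y hy)
      rw [hgap] at h2
      have hsum : f x₀ + conjG A g f y₀ = 0 := le_antisymm h2 h1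
      have hct : conjG A g f y₀ ≠ ⊤ := by
        intro ht
        rw [hr, ht, EReal.coe_add_top] at hsum
        exact (by simp : (⊤ : EReal) ≠ 0) hsum
      obtain ⟨s, hs⟩ : ∃ s : ℝ, conjG A g f y₀ = s :=
        ⟨(conjG A g f y₀).toReal, (EReal.coe_toReal hct (hconjnobot y₀ hy₀)).symm⟩
      have hrs : r + s = 0 := by
        rw [hr, hs, ← EReal.coe_add] at hsum
        exact_mod_cast hsum
      -- g x₀ y₀ = 0
      have hg00 : g x₀ y₀ = 0 := by
        have hle : (g x₀ y₀ : EReal) - f x₀ ≤ conjG A g f y₀ :=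
          le_iSup₂ (f := fun x (_ : x ∈ A) => (g x y₀ : EReal) - f x) x₀ hx₀
        rw [hr, hs, ← EReal.coe_sub, EReal.coe_le_coe_iff] at hle
        have := hg0 x₀ hx₀ y₀ hy₀
        linarith
      intro x hx y hy
      constructor
      · rw [hr, hg00, ← EReal.coe_sub, ← EReal.coe_sub, EReal.coe_le_coe_iff]
        have := hg0 x₀ hx₀ y hy
        linarith
      · rw [hr, hg00]
        have hle : (g x y₀ : EReal) - f x ≤ conjG A g f y₀ :=
          le_iSup₂ (f := fun x (_ : x ∈ A) => (g x y₀ : EReal) - f x) x hx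
        rcases eq_or_ne (f x) ⊤ with h | h
        · rw [h, EReal.top_sub_coe]
          exact le_top
        · obtain ⟨t, ht⟩ : ∃ t : ℝ, f x = t :=
            ⟨(f x).toReal, (EReal.coe_toReal h (hfnobot x hx)).symm⟩
          rw [ht, hs, ← EReal.coe_sub, EReal.coe_le_coe_iff] at hle
          rw [ht]
          simp only [EReal.coe_zero, sub_zero, ← EReal.coe_sub, EReal.coe_le_coe_iff]
          linarith
  · intro hsad
    exact (aux_forward A B f hfproper hfnobot g hg0 x₀ hx₀ y₀ hy₀ (hgx x₀ hx₀) hsad).1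
end
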